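/- There exists a constant C > 0 such that for all B > 0 and all w ∈ ℝ one has |S_B(w) − (2/5)·(w)₊^(5/2) − (1/2)·B²·(w)₊^(1/2)| ≤ C·B^(5/2). (Second-order approximation of the magnetic pressure by the non-magnetic pressure plus a B²-correction, equation (25-3-30).) -/

import Mathlib

/-!
`S_B(w)` is the trapezoidal rule with nodes `w, w - 2B, w - 4B, …` for
`∫_{-∞}^w (x)₊^{3/2} dx = (2/5) w₊^{5/2}`. With `u = √w`, `v = √(w - 2B)`, one trapezoid minus
the exact integral minus the increment of the correction `(1/2) B² √w` is exactly
`-(u - v)⁵ / 40`. Since `(u - v)(u + v) = 2B`, this local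
error is `O(B^{5/2} / n²)` once `w > 2nB`, so the errors telescope to `O(B^{5/2})`; on
`w ≤ 2B` every term is directly `O(B^{5/2})`.
-/

/-- The magnetic Thomas–Fermi pressure. -/
noncomputable def S (B w : ℝ) : ℝ :=
  2 * B * ((1 / 2) * (max w 0) ^ ((3 : ℝ) / 2) +
    ∑' j : ℕ, (max (w - 2 * ((j : ℝ) + 1) * B) 0) ^ ((3 : ℝ) / 2))

open Real Finset

lemma sqrt_max_zero (x : ℝ) : √(max x 0) = √x := by
  rcases le_total x 0 with hx | hx
  · rw [max_eq_right hx, sqrt_zero, sqrt_eq_zero_of_nonpos hx]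
  · rw [max_eq_left hx]

lemma max_zero_rpow_div_two (x r : ℝ) : max x 0 ^ (r / 2) = √x ^ r := by
  rw [rpow_div_two_eq_sqrt r (le_max_right x 0), sqrt_max_zero]

lemma max_zero_rpow_three_halves (x : ℝ) : max x 0 ^ ((3 : ℝ) / 2) = √x ^ 3 := by
  rw [max_zero_rpow_div_two, rpow_ofNat]

lemma abs_le_add_tsum_of_abs_sub_le {f : ℝ → ℝ} {h M : ℝ} {ε : ℕ → ℝ} (hh : 0 < h)
    (hε : Summable ε) (hε0 : ∀ n, 0 ≤ ε n) (hbase : ∀ x ≤ h, |f x| ≤ M)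
    (hstep : ∀ (n : ℕ) (x : ℝ), (n + 1) * h < x → |f x - f (x - h)| ≤ ε n) (x : ℝ) :
    |f x| ≤ M + ∑' n, ε n := by
  have partial_bound : ∀ n : ℕ, ∀ x ≤ (n + 1) * h, |f x| ≤ M + ∑ k ∈ range n, ε k := by
    intro n
    induction n with
    | zero => simpa using hbase
    | succ n ih =>
      intro x hx
      rw [sum_range_succ]
      rcases le_or_gt x ((n + 1) * h) with hle | hlt
      · linarith [ih x hle, hε0 n]
      · have hprev := ih (x - h) (by push_cast at hx; linarith)
        have hinc := hstep n x hlt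
        linarith [abs_sub_abs_le_abs_sub (f x) (f (x - h))]
  obtain ⟨n, hn⟩ := exists_nat_ge (x / h)
  have hx : x ≤ (n + 1) * h := by
    rw [div_le_iff₀ hh] at hn; linarith
  linarith [partial_bound n x hx, hε.sum_le_tsum (range n) (fun k _ ↦ hε0 k)]

lemma sub_pow_five_mul_sq_le {u v b m : ℝ} (hb : 0 < b) (hu : 0 ≤ u) (hv : 0 ≤ v) (hm : 0 ≤ m)
    (huv : u ^ 2 - v ^ 2 = 2 * b ^ 2) (hmu : 2 * m * b ^ 2 ≤ u ^ 2) :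
    (u - v) ^ 5 * m ^ 2 ≤ 8 * b ^ 5 := by
  have hd : 0 ≤ u - v := by nlinarith
  have hprod : (u - v) * (u + v) = 2 * b ^ 2 := by linear_combination huv
  have hd2 : (u - v) ^ 2 ≤ 2 * b ^ 2 := by nlinarith
  have hdu : (u - v) * u ≤ 2 * b ^ 2 := by nlinarith
  have hd2m : (u - v) ^ 2 * m ≤ 2 * b ^ 2 := by
    have : (u - v) ^ 2 * (2 * m * b ^ 2) ≤ (2 * b ^ 2) ^ 2 := by
      nlinarith [mul_le_mul_of_nonneg_left hmu (sq_nonneg (u - v)),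
        pow_le_pow_left₀ (mul_nonneg hd hu) hdu 2]
    nlinarith [pow_pos hb 2]
  have hd4m2 : (u - v) ^ 4 * m ^ 2 ≤ 4 * b ^ 4 := by
    nlinarith [pow_le_pow_left₀ (mul_nonneg (sq_nonneg (u - v)) hm) hd2m 2]
  have hdb : u - v ≤ 2 * b := by nlinarith
  nlinarith [mul_le_mul hd4m2 hdb hd (by positivity), pow_nonneg hd 4]

section MagneticPressure

variable {B : ℝ}

lemma summable_max_sub_rpow (hB : 0 < B) (w : ℝ) :
    Summable (fun j : ℕ ↦ max (w - 2 * ((j : ℝ) + 1) * B) 0 ^ ((3 : ℝ) / 2)) := by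
  apply summable_of_ne_finset_zero (s := range ⌈w / (2 * B)⌉₊)
  intro j hj
  rw [mem_range, not_lt, Nat.ceil_le, div_le_iff₀ (by positivity)] at hj
  rw [max_eq_right (by nlinarith), zero_rpow (by norm_num)]

lemma S_eq_add_S_sub (hB : 0 < B) (w : ℝ) :
    S B w = B * √w ^ 3 + B * √(w - 2 * B) ^ 3 + S B (w - 2 * B) := by
  have hshift : ∀ j : ℕ,
      w - 2 * (((j + 1 : ℕ) : ℝ) + 1) * B = w - 2 * B - 2 * ((j : ℝ) + 1) * B :=
    fun j ↦ by push_cast; ring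
  rw [S, (summable_max_sub_rpow hB w).tsum_eq_zero_add]
  simp only [hshift, S, max_zero_rpow_three_halves]
  norm_num
  ring

lemma S_eq_of_le_two_mul (hB : 0 < B) {w : ℝ} (hw : w ≤ 2 * B) : S B w = B * √w ^ 3 := by
  have hvanish : ∀ j : ℕ, max (w - 2 * ((j : ℝ) + 1) * B) 0 ^ ((3 : ℝ) / 2) = 0 := fun j ↦ by
    rw [max_eq_right (by nlinarith [j.cast_nonneg (α := ℝ)]), zero_rpow (by norm_num)]
  simp only [S, hvanish, tsum_zero, max_zero_rpow_three_halves]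
  ring

noncomputable def magneticPressureError (B w : ℝ) : ℝ :=
  S B w - (2 / 5) * √w ^ 5 - (1 / 2) * B ^ 2 * √w

lemma magneticPressureError_sub_shift (hB : 0 < B) {w : ℝ} (hw : 2 * B ≤ w) :
    magneticPressureError B w - magneticPressureError B (w - 2 * B) =
      -(√w - √(w - 2 * B)) ^ 5 / 40 := by
  have trapezoid_error : ∀ u v : ℝ, u ^ 2 - v ^ 2 = 2 * B →
      B * (u ^ 3 + v ^ 3) - (2 / 5) * (u ^ 5 - v ^ 5) - (1 / 2) * B ^ 2 * (u - v) =
        -(u - v) ^ 5 / 40 := by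
    intro u v h
    obtain rfl : B = (u ^ 2 - v ^ 2) / 2 := by linarith
    ring
  have hsq : √w ^ 2 - √(w - 2 * B) ^ 2 = 2 * B := by
    rw [sq_sqrt (by linarith), sq_sqrt (by linarith)]; ring
  rw [magneticPressureError, magneticPressureError, S_eq_add_S_sub hB w,
    ← trapezoid_error _ _ hsq]
  ring

lemma abs_magneticPressureError_le_of_le (hB : 0 < B) {w : ℝ} (hw : w ≤ 2 * B) :
    |magneticPressureError B w| ≤ 7 * √B ^ 5 := by
  set u := √w
  set b := √B
  have hu : 0 ≤ u := sqrt_nonneg w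
  have hb : 0 ≤ b := sqrt_nonneg B
  have hub : u ^ 2 ≤ 2 * b ^ 2 := by
    rw [sq_sqrt hB.le, ← sq_sqrt (by linarith : 0 ≤ 2 * B)]
    exact pow_le_pow_left₀ hu (sqrt_le_sqrt hw) 2
  have hBb : B = b ^ 2 := (sq_sqrt hB.le).symm
  have hu' : u ≤ 3 / 2 * b := by nlinarith
  rw [magneticPressureError, S_eq_of_le_two_mul hB hw, hBb, abs_le]
  constructor <;> nlinarith [pow_le_pow_left₀ hu hu' 5,
    mul_le_mul_of_nonneg_left hu' (pow_nonneg hb 4),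
    mul_le_mul_of_nonneg_left hub (mul_nonneg (sq_nonneg b) hu),
    pow_nonneg hu 5, pow_nonneg hu 3, pow_nonneg hb 4]

lemma abs_magneticPressureError_sub_shift_le (hB : 0 < B) (n : ℕ) {w : ℝ}
    (hw : (n + 1) * (2 * B) < w) :
    |magneticPressureError B w - magneticPressureError B (w - 2 * B)| ≤
      √B ^ 5 * (1 / (5 * ((n : ℝ) + 1) ^ 2)) := by
  have hm : (0 : ℝ) < n + 1 := by positivity
  have hbound := sub_pow_five_mul_sq_le (sqrt_pos.2 hB) (sqrt_nonneg w)
    (sqrt_nonneg (w - 2 * B)) hm.le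
    (by rw [sq_sqrt (x := w) (by nlinarith), sq_sqrt (by nlinarith), sq_sqrt hB.le]; ring)
    (by rw [sq_sqrt (x := w) (by nlinarith), sq_sqrt hB.le]; linarith)
  have hd : 0 ≤ √w - √(w - 2 * B) := sub_nonneg.2 (sqrt_le_sqrt (by linarith))
  rw [magneticPressureError_sub_shift hB (by nlinarith), abs_div, abs_neg,
    abs_of_nonneg (by positivity), abs_of_pos (by norm_num : (0 : ℝ) < 40),
    div_le_iff₀ (by norm_num)]
  calc (√w - √(w - 2 * B)) ^ 5 ≤ 8 * √B ^ 5 / (n + 1) ^ 2 :=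
      (le_div_iff₀ (by positivity)).2 hbound
    _ = _ := by field_simp; ring

end MagneticPressure

/-- Second-order approximation of the magnetic pressure by the non-magnetic
pressure plus a `B²`-correction (equation (25-3-30)): there is `C > 0` such that
for all `B > 0` and `w ∈ ℝ`,
`|S_B(w) − (2/5)·(w)₊^(5/2) − (1/2)·B²·(w)₊^(1/2)| ≤ C·B^(5/2)`. -/
theorem magnetic_pressure_second_order_approx :
    ∃ C : ℝ, 0 < C ∧ ∀ B : ℝ, 0 < B → ∀ w : ℝ,
      |S B w - (2 / 5) * (max w 0) ^ ((5 : ℝ) / 2)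
          - (1 / 2) * B ^ 2 * (max w 0) ^ ((1 : ℝ) / 2)|
        ≤ C * B ^ ((5 : ℝ) / 2) := by
  set κ : ℕ → ℝ := fun n ↦ 1 / (5 * ((n : ℝ) + 1) ^ 2)
  have hκ : Summable κ := by
    have := ((summable_nat_add_iff 1).2 (summable_one_div_nat_pow.2 one_lt_two)).mul_left (1 / 5)
    simpa [κ, div_eq_mul_inv, mul_comm] using this
  refine ⟨7 + ∑' n, κ n, by positivity, fun B hB w ↦ ?_⟩
  rw [max_zero_rpow_div_two, max_zero_rpow_div_two, rpow_one, rpow_ofNat,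
    rpow_div_two_eq_sqrt _ hB.le, rpow_ofNat]
  have hbound := abs_le_add_tsum_of_abs_sub_le (f := magneticPressureError B)
    (by positivity : 0 < 2 * B) (hκ.mul_left (√B ^ 5)) (fun n ↦ by positivity)
    (fun x hx ↦ abs_magneticPressureError_le_of_le hB hx)
    (fun n x hx ↦ abs_magneticPressureError_sub_shift_le hB n hx) w
  rw [magneticPressureError, tsum_mul_left] at hbound
  linarith
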